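/- Let f : ℝ → [0,∞) be continuous with v_f(θ,x) < ∞ for all (θ,x) ∈ [0,T0]×ℝ, where T0 > 0. Suppose there exists a continuous function θ̆ : ℝ → [0,T0] such that am_{T0}(f)(x) = v_f(θ̆(x), x) for every x ∈ ℝ. Set g := am_{T0}(f). Then for every x ∈ ℝ such that 0 < θ̆(x) < T0 and g is twice differentiable at x, the concavity condition (σ²/2)·g''(x) + (r - σ²/2)·g'(x) - r·g(x) ≤ 0 holds. -/

import Mathlib

/-!
Write `t = θ̆(x)` and `V = v_f(t, ·)`. Since `V ≥ g` with equality at `x`, the difference `V - g`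
has a minimum at `x`, so `g'(x) = V'(x)` and `g''(x) ≤ V''(x)`. Since `θ ↦ v_f(θ, x)` has an
interior minimum at `t`, `∂_θ v_f(t, x) = 0`; and `v_f` solves the backward equation
`∂_θ v = (σ²/2) ∂ₓₓ v + r̂ ∂ₓ v - r v`, because the Gaussian kernel satisfies
`∂ₛ N(m, s, y) = ½ ∂ₘ² N(m, s, y)`. Combining, `(σ²/2) g'' + r̂ g' - r g ≤ ∂_θ v_f(t, x) = 0`.
The derivatives are taken under the integral sign: a Gaussian times a polynomial in `y - m` is
dominated, locally uniformly in `(m, s)`, by a Gaussian of larger variance, which is integrable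
against `f` by hypothesis.
-/

open MeasureTheory Filter Set
open scoped ENNReal

/-- Gaussian density with mean `m` and variance `s2`. -/
noncomputable def gauss (m s2 y : ℝ) : ℝ :=
  (Real.sqrt (2 * Real.pi * s2))⁻¹ * Real.exp (-((y - m) ^ 2) / (2 * s2))

/-- European value of a payoff function `f`:
`v_f(θ,x) = e^{-rθ} ∫ N(x+r̂θ,σ²θ,y) f(y) dy` for `θ > 0`, `v_f(0,x) = f(x)`. -/
noncomputable def vEu (r σ : ℝ) (f : ℝ → ℝ) (θ x : ℝ) : ℝ :=
  if θ = 0 then f x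
  else Real.exp (-(r * θ)) * ∫ y, gauss (x + (r - σ ^ 2 / 2) * θ) (σ ^ 2 * θ) y * f y

open Real Topology

-- Derivatives in the mean `m`; the derivative in `z` has the opposite sign.
noncomputable def gauss' (m s z : ℝ) : ℝ := (z - m) / s * gauss m s z

noncomputable def gauss'' (m s z : ℝ) : ℝ := ((z - m) ^ 2 / s ^ 2 - 1 / s) * gauss m s z

lemma gauss_nonneg (m s z : ℝ) : 0 ≤ gauss m s z := by
  unfold gauss; positivity

@[fun_prop]
lemma continuous_gauss (m s : ℝ) : Continuous (gauss m s) := by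
  unfold gauss; fun_prop

@[fun_prop]
lemma continuous_gauss' (m s : ℝ) : Continuous (gauss' m s) := by
  unfold gauss'; fun_prop

@[fun_prop]
lemma continuous_gauss'' (m s : ℝ) : Continuous (gauss'' m s) := by
  unfold gauss''; fun_prop

-- The `s'` term reflects the heat equation `∂ₛ gauss = ∂ₘ² gauss / 2`.
theorem HasDerivAt.gauss {m s : ℝ → ℝ} {m' s' θ : ℝ} (z : ℝ) (hm : HasDerivAt m m' θ)
    (hs : HasDerivAt s s' θ) (hpos : 0 < s θ) :
    HasDerivAt (fun θ => gauss (m θ) (s θ) z)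
      (m' * gauss' (m θ) (s θ) z + s' / 2 * gauss'' (m θ) (s θ) z) θ := by
  have h2πs : 0 < 2 * π * s θ := by positivity
  have hq : 0 < √(2 * π * s θ) := sqrt_pos.2 h2πs
  have hnorm := ((hs.const_mul (2 * π)).sqrt h2πs.ne').inv hq.ne'
  have hexp := (((hm.const_sub z).pow 2).neg.div (hs.const_mul 2) (by positivity)).exp
  refine (hnorm.mul hexp).congr_deriv ?_
  simp only [gauss', gauss'', _root_.gauss, Pi.div_apply, Pi.neg_apply, Pi.pow_apply,
    Pi.inv_apply, sq_sqrt h2πs.le]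
  field_simp
  ring

lemma hasDerivAt_gauss_mean (m s z : ℝ) (hs : 0 < s) :
    HasDerivAt (fun m => gauss m s z) (gauss' m s z) m := by
  simpa using (hasDerivAt_id m).gauss z (hasDerivAt_const m s) hs

lemma hasDerivAt_gauss'_mean (m s z : ℝ) (hs : 0 < s) :
    HasDerivAt (fun m => gauss' m s z) (gauss'' m s z) m := by
  refine ((((hasDerivAt_id m).const_sub z).div_const s).mul
    (hasDerivAt_gauss_mean m s z hs)).congr_deriv ?_
  simp only [gauss', gauss'', id]
  field_simp
  ring

/- Passing from variance `s₁` to `s' > s₁` frees a factor `exp (-α (z - m)²)` with `α > 0`, which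
absorbs both the weight `exp |z - m|` and the shift of the mean from `m` to `c`. -/
lemma exists_exp_abs_mul_gauss_le {s₀ s₁ s' : ℝ} (δ : ℝ) (h0 : 0 < s₀) (h01 : s₀ ≤ s₁)
    (h1 : s₁ < s') :
    ∃ M, ∀ m c s z, s₀ ≤ s → s ≤ s₁ → |m - c| ≤ δ →
      exp |z - m| * gauss m s z ≤ M * gauss c s' z := by
  have hs₁ : 0 < s₁ := h0.trans_le h01
  have hs' : 0 < s' := hs₁.trans h1
  set α := 1 / (2 * s₁) - 1 / (2 * s')
  have hα : 0 < α := sub_pos.2 (by gcongr)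
  set b := 1 + δ / s'
  set C := b ^ 2 / (4 * α) + δ ^ 2 / (2 * s')
  refine ⟨√(2 * π * s') * (√(2 * π * s₀))⁻¹ * exp C, fun m c s z hs₀ hs₁' hmc => ?_⟩
  have hs : 0 < s := h0.trans_le hs₀
  set a := |z - m|
  have hzc : (z - c) ^ 2 ≤ (a + δ) ^ 2 := by
    rw [← sq_abs (z - c)]
    exact pow_le_pow_left₀ (abs_nonneg _) ((abs_sub_le z m c).trans (by gcongr)) 2
  have hquad : b * a - α * a ^ 2 ≤ b ^ 2 / (4 * α) := by
    rw [le_div_iff₀ (by positivity)]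
    nlinarith [sq_nonneg (2 * α * a - b)]
  have hexp : a + -(z - m) ^ 2 / (2 * s) ≤ C + -(z - c) ^ 2 / (2 * s') := by
    have hvar : -a ^ 2 / (2 * s) ≤ -a ^ 2 / (2 * s₁) := by
      rw [neg_div, neg_div, neg_le_neg_iff]; gcongr
    have hmean : -(a + δ) ^ 2 / (2 * s') ≤ -(z - c) ^ 2 / (2 * s') := by
      rw [neg_div, neg_div, neg_le_neg_iff]; gcongr
    have hexpand : a + -a ^ 2 / (2 * s₁) = b * a - α * a ^ 2 + δ ^ 2 / (2 * s')
        + -(a + δ) ^ 2 / (2 * s') := by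
      simp only [b, α]; field_simp; ring
    rw [← sq_abs (z - m)]
    linarith
  have hnorm : (√(2 * π * s))⁻¹ ≤ (√(2 * π * s₀))⁻¹ := by gcongr
  calc exp a * gauss m s z = (√(2 * π * s))⁻¹ * exp (a + -(z - m) ^ 2 / (2 * s)) := by
        rw [gauss, exp_add]; ring
    _ ≤ (√(2 * π * s₀))⁻¹ * exp (C + -(z - c) ^ 2 / (2 * s')) := by gcongr
    _ = _ := by
        have : 0 < √(2 * π * s') := sqrt_pos.2 (by positivity)
        rw [gauss, exp_add]; field_simp

lemma abs_gauss_deriv_le {s₀ s : ℝ} (a b m z : ℝ) (h0 : 0 < s₀) (hs : s₀ ≤ s) :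
    |a * gauss' m s z + b * gauss'' m s z| ≤
      2 * (|a| / s₀ + |b| / s₀ ^ 2 + |b| / s₀) * (exp |z - m| * gauss m s z) := by
  have hs0 : 0 < s := h0.trans_le hs
  set u := z - m
  have hu0 : 1 ≤ 2 * exp |u| := by linarith [one_le_exp (abs_nonneg u)]
  have hu1 : |u| ≤ 2 * exp |u| := by linarith [add_one_le_exp |u|, exp_pos |u|]
  have hu2 : u ^ 2 ≤ 2 * exp |u| := by
    have := pow_div_factorial_le_exp |u| (abs_nonneg u) 2
    rw [sq_abs] at this
    norm_num [Nat.factorial] at this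
    linarith
  have hcoef : |a * (u / s) + b * (u ^ 2 / s ^ 2 - 1 / s)| ≤
      |a| * (|u| / s₀) + |b| * (u ^ 2 / s₀ ^ 2) + |b| * (1 / s₀) := by
    calc _ ≤ |a| * |u / s| + |b| * (|u ^ 2 / s ^ 2| + |1 / s|) := by
          refine (abs_add_le _ _).trans ?_
          rw [abs_mul, abs_mul]
          gcongr
          exact abs_sub _ _
      _ = |a| * (|u| / s) + |b| * (u ^ 2 / s ^ 2) + |b| * (1 / s) := by
          rw [abs_div, abs_div, abs_div, abs_of_pos hs0, abs_of_pos (by positivity : (0:ℝ) < s ^ 2),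
            abs_of_nonneg (sq_nonneg u), abs_one]
          ring
      _ ≤ _ := by gcongr
  have hsplit : a * gauss' m s z + b * gauss'' m s z =
      (a * (u / s) + b * (u ^ 2 / s ^ 2 - 1 / s)) * gauss m s z := by
    simp only [gauss', gauss'', u]; ring
  have hg := gauss_nonneg m s z
  rw [hsplit, abs_mul, abs_of_nonneg hg]
  calc _ ≤ (|a| * (|u| / s₀) + |b| * (u ^ 2 / s₀ ^ 2) + |b| * (1 / s₀)) * gauss m s z := by
        gcongr
    _ = (|a| / s₀ * |u| + |b| / s₀ ^ 2 * u ^ 2 + |b| / s₀ * 1) * gauss m s z := by ring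
    _ ≤ (|a| / s₀ * (2 * exp |u|) + |b| / s₀ ^ 2 * (2 * exp |u|) + |b| / s₀ * (2 * exp |u|))
          * gauss m s z := by gcongr
    _ = _ := by ring

lemma exists_abs_gauss_deriv_le (a b : ℝ) {s₀ s₁ s' : ℝ} (δ : ℝ) (h0 : 0 < s₀) (h01 : s₀ ≤ s₁)
    (h1 : s₁ < s') :
    ∃ K, ∀ m c s z, s₀ ≤ s → s ≤ s₁ → |m - c| ≤ δ →
      |a * gauss' m s z + b * gauss'' m s z| ≤ K * gauss c s' z := by
  obtain ⟨M, hM⟩ := exists_exp_abs_mul_gauss_le δ h0 h01 h1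
  refine ⟨2 * (|a| / s₀ + |b| / s₀ ^ 2 + |b| / s₀) * M, fun m c s z hs₀ hs₁ hmc => ?_⟩
  calc _ ≤ 2 * (|a| / s₀ + |b| / s₀ ^ 2 + |b| / s₀) * (exp |z - m| * gauss m s z) :=
        abs_gauss_deriv_le a b m z h0 hs₀
    _ ≤ 2 * (|a| / s₀ + |b| / s₀ ^ 2 + |b| / s₀) * (M * gauss c s' z) :=
        mul_le_mul_of_nonneg_left (hM m c s z hs₀ hs₁ hmc) (by positivity)
    _ = _ := by ring

lemma hasDerivAt_integral_mul_of_abs_le {F F' : ℝ → ℝ → ℝ} {f G : ℝ → ℝ} {θ₀ : ℝ}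
    {U : Set ℝ} (hU : U ∈ 𝓝 θ₀) (hf : AEStronglyMeasurable f)
    (hF : ∀ θ, AEStronglyMeasurable (F θ)) (hF' : AEStronglyMeasurable (F' θ₀))
    (hFi : Integrable (fun z => F θ₀ z * f z))
    (hderiv : ∀ θ ∈ U, ∀ z, HasDerivAt (F · z) (F' θ z) θ)
    (hle : ∀ θ ∈ U, ∀ z, |F' θ z| ≤ G z) (hGi : Integrable (fun z => G z * f z)) :
    Integrable (fun z => F' θ₀ z * f z) ∧
      HasDerivAt (fun θ => ∫ z, F θ z * f z) (∫ z, F' θ₀ z * f z) θ₀ :=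
  hasDerivAt_integral_of_dominated_loc_of_deriv_le hU
    (.of_forall fun θ => (hF θ).mul hf) hFi (hF'.mul hf)
    (.of_forall fun z θ hθ => by
      rw [Real.norm_eq_abs, abs_mul]
      exact (mul_le_mul_of_nonneg_right ((hle θ hθ z).trans (le_abs_self _))
        (abs_nonneg _)).trans_eq (abs_mul _ _).symm)
    hGi.abs
    (.of_forall fun z θ hθ => (hderiv θ hθ z).mul_const (f z))

lemma hasDerivAt_integral_gauss_affine {f : ℝ → ℝ} (hf : AEStronglyMeasurable f)
    {x μ s v t s' : ℝ} (hpos : 0 < s + v * t) (hlt : s + v * t < s')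
    (hi : Integrable (fun z => gauss (x + μ * t) (s + v * t) z * f z))
    (hi' : Integrable (fun z => gauss (x + μ * t) s' z * f z)) :
    Integrable (fun z => (μ * gauss' (x + μ * t) (s + v * t) z
        + v / 2 * gauss'' (x + μ * t) (s + v * t) z) * f z) ∧
      HasDerivAt (fun θ => ∫ z, gauss (x + μ * θ) (s + v * θ) z * f z)
        (∫ z, (μ * gauss' (x + μ * t) (s + v * t) z
          + v / 2 * gauss'' (x + μ * t) (s + v * t) z) * f z) t := by
  have h01 : (s + v * t) / 2 ≤ (s + v * t + s') / 2 := by linarith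
  obtain ⟨K, hK⟩ := exists_abs_gauss_deriv_le μ (v / 2) 1 (half_pos hpos) h01
    (by linarith : (s + v * t + s') / 2 < s')
  have hvar : ∀ᶠ θ in 𝓝 t, s + v * θ ∈ Ioo ((s + v * t) / 2) ((s + v * t + s') / 2) :=
    (by fun_prop : Continuous fun θ => s + v * θ).continuousAt.eventually_mem
      (Ioo_mem_nhds (by linarith : (s + v * t) / 2 < s + v * t) (by linarith))
  have hmean : ∀ᶠ θ in 𝓝 t, |x + μ * θ - (x + μ * t)| < 1 :=
    ((by fun_prop : Continuous fun θ => |x + μ * θ - (x + μ * t)|).tendsto t).eventually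
      (gt_mem_nhds (by simp))
  refine hasDerivAt_integral_mul_of_abs_le (F := fun θ z => gauss (x + μ * θ) (s + v * θ) z)
    (F' := fun θ z =>
      μ * gauss' (x + μ * θ) (s + v * θ) z + v / 2 * gauss'' (x + μ * θ) (s + v * θ) z)
    (hvar.and hmean) hf
    (fun θ => (continuous_gauss _ _).aestronglyMeasurable)
    (Continuous.aestronglyMeasurable (by fun_prop)) hi (fun θ hθ z => ?_)
    (fun θ hθ z => hK _ _ _ z hθ.1.1.le hθ.1.2.le hθ.2.le)
    (G := fun z => K * gauss (x + μ * t) s' z) (by simpa [mul_assoc] using hi'.const_mul K)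
  simpa using (((hasDerivAt_id θ).const_mul μ).const_add x).gauss z
    (((hasDerivAt_id θ).const_mul v).const_add s) ((half_pos hpos).trans hθ.1.1)

lemma hasDerivAt_integral_gauss_mean {f : ℝ → ℝ} (hf : AEStronglyMeasurable f)
    {m₀ s s' : ℝ} (hs : 0 < s) (hss' : s < s')
    (hi : Integrable (fun z => gauss m₀ s z * f z))
    (hi' : Integrable (fun z => gauss m₀ s' z * f z)) :
    Integrable (fun z => gauss' m₀ s z * f z) ∧
      HasDerivAt (fun m => ∫ z, gauss m s z * f z) (∫ z, gauss' m₀ s z * f z) m₀ := by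
  simpa using hasDerivAt_integral_gauss_affine hf (x := 0) (μ := 1) (v := 0) (t := m₀)
    (s := s) (s' := s') (by simpa using hs) (by simpa using hss') (by simpa using hi)
    (by simpa using hi')

lemma hasDerivAt_integral_gauss'_mean {f : ℝ → ℝ} (hf : AEStronglyMeasurable f)
    {m₀ s s' : ℝ} (hs : 0 < s) (hss' : s < s')
    (hi : Integrable (fun z => gauss' m₀ s z * f z))
    (hi' : Integrable (fun z => gauss m₀ s' z * f z)) :
    Integrable (fun z => gauss'' m₀ s z * f z) ∧
      HasDerivAt (fun m => ∫ z, gauss' m s z * f z) (∫ z, gauss'' m₀ s z * f z) m₀ := by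
  obtain ⟨K, hK⟩ := exists_abs_gauss_deriv_le 0 1 1 hs le_rfl hss'
  refine hasDerivAt_integral_mul_of_abs_le (F := fun m z => gauss' m s z)
    (F' := fun m z => gauss'' m s z) (Metric.ball_mem_nhds m₀ one_pos) hf
    (fun m => (continuous_gauss' _ _).aestronglyMeasurable)
    (continuous_gauss'' _ _).aestronglyMeasurable hi
    (fun m _ z => hasDerivAt_gauss'_mean m s z hs) (fun m hm z => ?_)
    (G := fun z => K * gauss m₀ s' z) (by simpa [mul_assoc] using hi'.const_mul K)
  simpa using hK m m₀ s z le_rfl le_rfl (Metric.mem_ball.1 hm).le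

lemma deriv_deriv_nonneg_of_isLocalMin {h : ℝ → ℝ} {x : ℝ} (hmin : IsLocalMin h x)
    (hc : ContinuousAt h x) : 0 ≤ deriv (deriv h) x := by
  by_contra! hneg
  have hmax := isLocalMax_of_deriv_deriv_neg hneg hmin.deriv_eq_zero hc
  have hconst : h =ᶠ[𝓝 x] fun _ => h x := by
    filter_upwards [hmin, hmax] with y hy₁ hy₂ using le_antisymm hy₂ hy₁
  have : deriv (deriv h) x = 0 := by
    rw [hconst.deriv.deriv_eq]
    simp
  exact hneg.ne this

lemma deriv_eq_and_deriv_deriv_le_of_le {g V : ℝ → ℝ} {x : ℝ} (hle : ∀ᶠ y in 𝓝 x, g y ≤ V y)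
    (heq : g x = V x) (hg : ∀ᶠ y in 𝓝 x, DifferentiableAt ℝ g y)
    (hg2 : DifferentiableAt ℝ (deriv g) x) (hV : ∀ᶠ y in 𝓝 x, DifferentiableAt ℝ V y)
    (hV2 : DifferentiableAt ℝ (deriv V) x) :
    deriv g x = deriv V x ∧ deriv (deriv g) x ≤ deriv (deriv V) x := by
  have hmin : IsLocalMin (V - g) x := by
    filter_upwards [hle] with y hy
    simpa [heq] using hy
  have hderiv : deriv (V - g) =ᶠ[𝓝 x] deriv V - deriv g := by
    filter_upwards [hg, hV] with y hgy hVy using deriv_sub hVy hgy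
  constructor
  · have := hmin.deriv_eq_zero
    rw [hderiv.eq_of_nhds, Pi.sub_apply, sub_eq_zero] at this
    exact this.symm
  · have := deriv_deriv_nonneg_of_isLocalMin hmin
      (hV.self_of_nhds.sub hg.self_of_nhds).continuousAt
    rw [hderiv.deriv_eq, deriv_sub hV2 hg2, sub_nonneg] at this
    exact this

section European

variable {r σ : ℝ} {f : ℝ → ℝ}

lemma vEu_nonneg (hf0 : ∀ y, 0 ≤ f y) (θ x : ℝ) : 0 ≤ vEu r σ f θ x := by
  unfold vEu
  split_ifs
  · exact hf0 x
  · exact mul_nonneg (exp_nonneg _)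
      (integral_nonneg fun z => mul_nonneg (gauss_nonneg _ _ _) (hf0 z))

lemma vEu_of_ne_zero {θ : ℝ} (hθ : θ ≠ 0) :
    vEu r σ f θ = fun x =>
      exp (-(r * θ)) * ∫ z, gauss (x + (r - σ ^ 2 / 2) * θ) (σ ^ 2 * θ) z * f z :=
  funext fun _ => if_neg hθ

variable {t s' : ℝ} (hf : AEStronglyMeasurable f) (hσ : σ ≠ 0) (ht : 0 < t) (hs' : σ ^ 2 * t < s')
include hf hσ ht hs'

lemma hasDerivAt_vEu {y : ℝ}
    (hi : Integrable (fun z => gauss (y + (r - σ ^ 2 / 2) * t) (σ ^ 2 * t) z * f z))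
    (hi' : Integrable (fun z => gauss (y + (r - σ ^ 2 / 2) * t) s' z * f z)) :
    Integrable (fun z => gauss' (y + (r - σ ^ 2 / 2) * t) (σ ^ 2 * t) z * f z) ∧
      HasDerivAt (vEu r σ f t)
        (exp (-(r * t)) * ∫ z, gauss' (y + (r - σ ^ 2 / 2) * t) (σ ^ 2 * t) z * f z) y := by
  have h := hasDerivAt_integral_gauss_mean hf (by positivity) hs' hi hi'
  rw [vEu_of_ne_zero ht.ne']
  exact ⟨h.1, (h.2.comp_add_const y _).const_mul _⟩

lemma hasDerivAt_deriv_vEu {y : ℝ}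
    (hi : Integrable (fun z => gauss' (y + (r - σ ^ 2 / 2) * t) (σ ^ 2 * t) z * f z))
    (hi' : Integrable (fun z => gauss (y + (r - σ ^ 2 / 2) * t) s' z * f z)) :
    Integrable (fun z => gauss'' (y + (r - σ ^ 2 / 2) * t) (σ ^ 2 * t) z * f z) ∧
      HasDerivAt
        (fun y => exp (-(r * t)) * ∫ z, gauss' (y + (r - σ ^ 2 / 2) * t) (σ ^ 2 * t) z * f z)
        (exp (-(r * t)) * ∫ z, gauss'' (y + (r - σ ^ 2 / 2) * t) (σ ^ 2 * t) z * f z) y := by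
  have h := hasDerivAt_integral_gauss'_mean hf (by positivity) hs' hi hi'
  exact ⟨h.1, (h.2.comp_add_const y _).const_mul _⟩

lemma hasDerivAt_vEu_time {x : ℝ}
    (hi : Integrable (fun z => gauss (x + (r - σ ^ 2 / 2) * t) (σ ^ 2 * t) z * f z))
    (hi' : Integrable (fun z => gauss (x + (r - σ ^ 2 / 2) * t) s' z * f z)) :
    HasDerivAt (fun θ => vEu r σ f θ x)
      (-r * vEu r σ f t x
        + (r - σ ^ 2 / 2) * (exp (-(r * t)) *
          ∫ z, gauss' (x + (r - σ ^ 2 / 2) * t) (σ ^ 2 * t) z * f z)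
        + σ ^ 2 / 2 * (exp (-(r * t)) *
          ∫ z, gauss'' (x + (r - σ ^ 2 / 2) * t) (σ ^ 2 * t) z * f z)) t := by
  obtain ⟨hi₁, -⟩ := hasDerivAt_vEu hf hσ ht hs' hi hi'
  obtain ⟨hi₂, -⟩ := hasDerivAt_deriv_vEu hf hσ ht hs' hi₁ hi'
  have hK := (hasDerivAt_integral_gauss_affine hf (x := x) (μ := r - σ ^ 2 / 2) (s := 0)
    (v := σ ^ 2) (by simpa using (by positivity : 0 < σ ^ 2 * t)) (by simpa using hs')
    (by simpa using hi) hi').2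
  simp only [zero_add] at hK
  have hsplit : ∫ z, ((r - σ ^ 2 / 2) * gauss' (x + (r - σ ^ 2 / 2) * t) (σ ^ 2 * t) z
        + σ ^ 2 / 2 * gauss'' (x + (r - σ ^ 2 / 2) * t) (σ ^ 2 * t) z) * f z
      = (r - σ ^ 2 / 2) * (∫ z, gauss' (x + (r - σ ^ 2 / 2) * t) (σ ^ 2 * t) z * f z)
        + σ ^ 2 / 2 * ∫ z, gauss'' (x + (r - σ ^ 2 / 2) * t) (σ ^ 2 * t) z * f z := by
    simp_rw [add_mul, mul_assoc]
    rw [integral_add (hi₁.const_mul _) (hi₂.const_mul _), integral_const_mul, integral_const_mul]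
  have hdisc : HasDerivAt (fun θ => exp (-(r * θ))) (-r * exp (-(r * t))) t := by
    simpa [mul_comm] using ((hasDerivAt_id t).const_mul r).neg.exp
  have hev : (fun θ => vEu r σ f θ x) =ᶠ[𝓝 t] fun θ => exp (-(r * θ)) *
      ∫ z, gauss (x + (r - σ ^ 2 / 2) * θ) (σ ^ 2 * θ) z * f z := by
    filter_upwards [eventually_ne_nhds ht.ne'] with θ hθ
    rw [vEu_of_ne_zero hθ]
  refine ((hdisc.mul hK).congr_of_eventuallyEq hev).congr_deriv ?_
  rw [hsplit, vEu_of_ne_zero ht.ne']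
  ring

end European

theorem embedded_American_concavity_condition_general
    (r σ T0 : ℝ) (hσ : 0 < σ)
    (f : ℝ → ℝ) (hfc : Continuous f) (hf0 : ∀ x, 0 ≤ f x)
    (hfint : ∀ θ ∈ Set.Ioc (0 : ℝ) T0, ∀ x : ℝ,
      Integrable (fun y => gauss (x + (r - σ ^ 2 / 2) * θ) (σ ^ 2 * θ) y * f y))
    (θbr : ℝ → ℝ)
    (gam : ℝ → ℝ) (hgam : ∀ x : ℝ, gam x = ⨅ θ : Set.Icc (0 : ℝ) T0, vEu r σ f θ.1 x)
    (hmin : ∀ x : ℝ, gam x = vEu r σ f (θbr x) x)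
    (x : ℝ) (hx1 : 0 < θbr x) (hx2 : θbr x < T0)
    (hdiff : ∀ᶠ y in nhds x, DifferentiableAt ℝ gam y)
    (hdiff2 : DifferentiableAt ℝ (deriv gam) x) :
    σ ^ 2 / 2 * deriv (deriv gam) x + (r - σ ^ 2 / 2) * deriv gam x - r * gam x ≤ 0 := by
  set t := θbr x
  have hf : AEStronglyMeasurable f := hfc.aestronglyMeasurable
  have hs' : σ ^ 2 * t < σ ^ 2 * T0 := by gcongr
  have hint' : ∀ y, Integrable (fun z => gauss (y + (r - σ ^ 2 / 2) * t) (σ ^ 2 * T0) z * f z) :=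
    fun y => by
      convert hfint T0 ⟨hx1.trans hx2, le_rfl⟩ (y + (r - σ ^ 2 / 2) * (t - T0)) using 4
      ring
  have hlow : ∀ θ ∈ Icc 0 T0, ∀ y, gam y ≤ vEu r σ f θ y := fun θ hθ y => by
    rw [hgam]
    exact ciInf_le ⟨0, by rintro _ ⟨θ, rfl⟩; exact vEu_nonneg hf0 _ _⟩ (⟨θ, hθ⟩ : Icc 0 T0)
  have hV y := hasDerivAt_vEu hf hσ.ne' hx1 hs' (hfint t ⟨hx1, hx2.le⟩ y) (hint' y)
  have hV' := hasDerivAt_deriv_vEu hf hσ.ne' hx1 hs' (hV x).1 (hint' x)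
  have hderivV := funext fun y => (hV y).2.deriv
  have htime := IsLocalMin.hasDerivAt_eq_zero
    (by filter_upwards [Ioo_mem_nhds hx1 hx2] with θ hθ
        exact (hmin x).symm.trans_le (hlow θ (Ioo_subset_Icc_self hθ) x))
    (hasDerivAt_vEu_time hf hσ.ne' hx1 hs' (hfint t ⟨hx1, hx2.le⟩ x) (hint' x))
  obtain ⟨hd1, hd2⟩ := deriv_eq_and_deriv_deriv_le_of_le (.of_forall (hlow t ⟨hx1.le, hx2.le⟩))
    (hmin x) hdiff hdiff2 (.of_forall fun y => (hV y).2.differentiableAt)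
    (by rw [hderivV]; exact hV'.2.differentiableAt)
  rw [hderivV, hV'.2.deriv] at hd2
  rw [hd1, (hV x).2.deriv, hmin x]
  linarith [mul_le_mul_of_nonneg_left hd2 (by positivity : (0 : ℝ) ≤ σ ^ 2 / 2)]

/-- Let `g := am_{T0}(f)` be the embedded American option of a
continuous nonnegative payoff `f`, with the defining infimum attained at a
continuous curve `θ̆`. At every point `x` with `0 < θ̆(x) < T0` at which `g` is
twice differentiable, the concavity condition
`(σ²/2) g''(x) + (r - σ²/2) g'(x) - r g(x) ≤ 0` holds. -/
theorem embedded_American_concavity_condition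
    (r σ T0 : ℝ) (hr : 0 ≤ r) (hσ : 0 < σ) (hT0 : 0 < T0)
    (f : ℝ → ℝ) (hfc : Continuous f) (hf0 : ∀ x, 0 ≤ f x)
    (hfint : ∀ θ ∈ Set.Ioc (0 : ℝ) T0, ∀ x : ℝ,
      Integrable (fun y => gauss (x + (r - σ ^ 2 / 2) * θ) (σ ^ 2 * θ) y * f y))
    (θbr : ℝ → ℝ) (hθc : Continuous θbr) (hθmem : ∀ x, θbr x ∈ Set.Icc (0 : ℝ) T0)
    (gam : ℝ → ℝ) (hgam : ∀ x : ℝ, gam x = ⨅ θ : Set.Icc (0 : ℝ) T0, vEu r σ f θ.1 x)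
    (hmin : ∀ x : ℝ, gam x = vEu r σ f (θbr x) x)
    (x : ℝ) (hx1 : 0 < θbr x) (hx2 : θbr x < T0)
    (hdiff : ∀ᶠ y in nhds x, DifferentiableAt ℝ gam y)
    (hdiff2 : DifferentiableAt ℝ (deriv gam) x) :
    σ ^ 2 / 2 * deriv (deriv gam) x + (r - σ ^ 2 / 2) * deriv gam x - r * gam x ≤ 0 :=
  embedded_American_concavity_condition_general r σ T0 hσ f hfc hf0 hfint θbr gam hgam hmin x hx1
    hx2 hdiff hdiff2
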